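/- Let w : ℝ → ℝ be four times continuously differentiable, let x₀ ∈ ℝ and Δx > 0, and for k ∈ {−1, 0, 1} let w̄_k = (1/Δx)·∫_{x₀+(k−1/2)Δx}^{x₀+(k+1/2)Δx} w(x)dx denote the cell averages of w over the three consecutive cells of size Δx centered at x₀ − Δx, x₀, x₀ + Δx. Then |w(x₀) − (w̄₀ − (1/24)·(w̄₁ − 2·w̄₀ + w̄₋₁))| ≤ (Δx⁴/100)·sup_{x ∈ [x₀−3Δx/2, x₀+3Δx/2]} |w⁗(x)|. That is, the correction of the cell average by one twenty-fourth of its discrete second difference recovers the pointwise value with fourth-order accuracy. -/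

import Mathlib

/-!
The error functional `E(w) = w x₀ - (w̄₀ - (w̄₁ - 2 w̄₀ + w̄₋₁) / 24)` is linear and vanishes on
cubic polynomials, so it only sees the remainder `R = w - P` of the cubic Taylor polynomial `P`
of `w` at `x₀`. Lagrange's bound `|R t| ≤ M (t - x₀)⁴ / 24` integrates over the three cells to
`|E(w)| ≤ (67/480)(M/24) Δx⁴ < M Δx⁴ / 100`.
-/

open Set Finset intervalIntegral MeasureTheory
open scoped Nat

theorem taylorWithinEval_uIcc_eq_sum {f : ℝ → ℝ} {n : ℕ} (hf : ContDiff ℝ n f) {x₀ x : ℝ}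
    (hx : x₀ ≠ x) :
    taylorWithinEval f n (uIcc x₀ x) x₀ x =
      ∑ j ∈ range (n + 1), iteratedDeriv j f x₀ / j ! * (x - x₀) ^ j := by
  rw [taylor_within_apply]
  refine Finset.sum_congr rfl fun j hj => ?_
  have hjn : (j : WithTop ℕ∞) ≤ n := by
    exact_mod_cast Nat.lt_succ_iff.mp (Finset.mem_range.mp hj)
  rw [iteratedDerivWithin_eq_iteratedDeriv (uniqueDiffOn_uIcc hx) (hf.of_le hjn).contDiffAt
    left_mem_uIcc, smul_eq_mul]
  ring

theorem abs_sub_sum_taylor_le {f : ℝ → ℝ} {n : ℕ} (hf : ContDiff ℝ (n + 1) f) {x₀ x M : ℝ}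
    (hM : ∀ t ∈ uIcc x₀ x, |iteratedDeriv (n + 1) f t| ≤ M) :
    |f x - ∑ j ∈ range (n + 1), iteratedDeriv j f x₀ / j ! * (x - x₀) ^ j|
      ≤ M * |x - x₀| ^ (n + 1) / (n + 1)! := by
  rcases eq_or_ne x₀ x with rfl | hx
  · simp [Finset.sum_range_succ']
  obtain ⟨y, hy, hrem⟩ := taylor_mean_remainder_lagrange_iteratedDeriv hx hf.contDiffOn
  rw [← taylorWithinEval_uIcc_eq_sum hf.of_succ hx, hrem, abs_div, abs_mul, abs_pow,
    Nat.abs_cast]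
  gcongr
  exact hM y (uIoo_subset_uIcc_self hy)

theorem IsCompact.le_biSup_of_continuousOn {α : Type*} [TopologicalSpace α] {K : Set α}
    (hK : IsCompact K) {g : α → ℝ} (hg : ContinuousOn g K) {t : α} (ht : t ∈ K) :
    g t ≤ ⨆ x ∈ K, g x := by
  refine le_ciSup₂ (f := fun x (_ : x ∈ K) => g x) ((hK.bddAbove_image hg).mono ?_) t ht
  simp only [iUnion_subset_iff, range_subset_iff]
  exact fun x hx => ⟨x, hx, rfl⟩

noncomputable def cellAverage (w : ℝ → ℝ) (x₀ Δx k : ℝ) : ℝ :=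
  (1 / Δx) * ∫ x in (x₀ + (k - 1 / 2) * Δx)..(x₀ + (k + 1 / 2) * Δx), w x

noncomputable def pointValueError (w : ℝ → ℝ) (x₀ Δx : ℝ) : ℝ :=
  w x₀ - (cellAverage w x₀ Δx 0
    - (1 / 24) * (cellAverage w x₀ Δx 1 - 2 * cellAverage w x₀ Δx 0 + cellAverage w x₀ Δx (-1)))

theorem cellAverage_sub {f g : ℝ → ℝ} (hf : Continuous f) (hg : Continuous g) (x₀ Δx k : ℝ) :
    cellAverage (fun t => f t - g t) x₀ Δx k = cellAverage f x₀ Δx k - cellAverage g x₀ Δx k := by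
  rw [cellAverage, cellAverage, cellAverage,
    integral_sub (hf.intervalIntegrable _ _) (hg.intervalIntegrable _ _), mul_sub]

theorem pointValueError_sub {f g : ℝ → ℝ} (hf : Continuous f) (hg : Continuous g) (x₀ Δx : ℝ) :
    pointValueError (fun t => f t - g t) x₀ Δx =
      pointValueError f x₀ Δx - pointValueError g x₀ Δx := by
  simp only [pointValueError, cellAverage_sub hf hg]
  ring

theorem integral_sub_pow_cell (x₀ Δx k : ℝ) (j : ℕ) :
    ∫ t in (x₀ + (k - 1 / 2) * Δx)..(x₀ + (k + 1 / 2) * Δx), (t - x₀) ^ j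
      = Δx ^ (j + 1) * ((k + 1 / 2) ^ (j + 1) - (k - 1 / 2) ^ (j + 1)) / (j + 1) := by
  rw [integral_comp_sub_right (· ^ j), integral_pow, add_sub_cancel_left, add_sub_cancel_left,
    mul_pow, mul_pow]
  ring

theorem cellAverage_sum_mul_sub_pow (c : ℕ → ℝ) (n : ℕ) {Δx : ℝ} (hΔx : Δx ≠ 0) (x₀ k : ℝ) :
    cellAverage (fun t => ∑ j ∈ range n, c j * (t - x₀) ^ j) x₀ Δx k
      = ∑ j ∈ range n,
          c j * Δx ^ j * ((k + 1 / 2) ^ (j + 1) - (k - 1 / 2) ^ (j + 1)) / (j + 1) := by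
  rw [cellAverage,
    integral_finsetSum fun j _ => (by fun_prop : Continuous _).intervalIntegrable _ _,
    Finset.mul_sum]
  refine Finset.sum_congr rfl fun j _ => ?_
  rw [intervalIntegral.integral_const_mul, integral_sub_pow_cell]
  field_simp
  ring

theorem pointValueError_cubic (c : ℕ → ℝ) (x₀ : ℝ) {Δx : ℝ} (hΔx : Δx ≠ 0) :
    pointValueError (fun t => ∑ j ∈ range 4, c j * (t - x₀) ^ j) x₀ Δx = 0 := by
  rw [pointValueError]
  simp only [cellAverage_sum_mul_sub_pow c 4 hΔx]
  simp only [Finset.sum_range_succ, Finset.sum_range_zero]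
  ring

theorem abs_cellAverage_le {R : ℝ → ℝ} {x₀ Δx k C : ℝ} (hΔx : 0 < Δx)
    (hRC : ∀ t ∈ Icc (x₀ + (k - 1 / 2) * Δx) (x₀ + (k + 1 / 2) * Δx), |R t| ≤ C * (t - x₀) ^ 4) :
    |cellAverage R x₀ Δx k| ≤ C * Δx ^ 4 * ((k + 1 / 2) ^ 5 - (k - 1 / 2) ^ 5) / 5 := by
  have hle : x₀ + (k - 1 / 2) * Δx ≤ x₀ + (k + 1 / 2) * Δx := by nlinarith
  have hint := norm_integral_le_of_norm_le hle
    (f := R) (Filter.Eventually.of_forall fun t ht => hRC t (Ioc_subset_Icc_self ht))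
    ((by fun_prop : Continuous fun t => C * (t - x₀) ^ 4).intervalIntegrable (μ := volume) _ _)
  rw [intervalIntegral.integral_const_mul, integral_sub_pow_cell] at hint
  rw [cellAverage, abs_mul, abs_of_pos (one_div_pos.2 hΔx), ← Real.norm_eq_abs]
  refine (mul_le_mul_of_nonneg_left hint (by positivity)).trans_eq ?_
  field_simp
  ring

theorem abs_pointValueError_le {R : ℝ → ℝ} {x₀ Δx C : ℝ} (hΔx : 0 < Δx) (hR₀ : R x₀ = 0)
    (hRC : ∀ t ∈ Icc (x₀ - 3 * Δx / 2) (x₀ + 3 * Δx / 2), |R t| ≤ C * (t - x₀) ^ 4) :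
    |pointValueError R x₀ Δx| ≤ 67 / 480 * C * Δx ^ 4 := by
  have hcell : ∀ k : ℝ, -1 ≤ k → k ≤ 1 →
      |cellAverage R x₀ Δx k| ≤ C * Δx ^ 4 * ((k + 1 / 2) ^ 5 - (k - 1 / 2) ^ 5) / 5 :=
    fun k hk₁ hk₂ => abs_cellAverage_le hΔx fun t ht =>
      hRC t ⟨by nlinarith [ht.1], by nlinarith [ht.2]⟩
  -- The cells give `C Δx⁴ / 80` (centre) and `121 C Δx⁴ / 80` (sides), weighted by `13/12`, `1/24`.
  have hm := abs_le.1 (hcell (-1) le_rfl (by norm_num))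
  have h0 := abs_le.1 (hcell 0 (by norm_num) (by norm_num))
  have hp := abs_le.1 (hcell 1 (by norm_num) le_rfl)
  rw [pointValueError, hR₀, abs_le]
  constructor <;> linarith [hm.1, hm.2, h0.1, h0.2, hp.1, hp.2]

/-- Fourth-order pointwise recovery from cell averages: for a `C⁴` function
`w`, correcting the central cell average by one twenty-fourth of its discrete
second difference recovers `w(x₀)` with an error bounded by
`(Δx⁴/100) · sup |w⁗|` over the three cells. -/
theorem pointwise_value_from_cell_averages_fourth_order
    (w : ℝ → ℝ) (hw : ContDiff ℝ 4 w) (x0 Δx : ℝ) (hΔx : 0 < Δx)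
    (wm1 w0 wp1 : ℝ)
    (hwm1 : wm1 = (1/Δx) * ∫ x in (x0 + (-1 - 1/2)*Δx)..(x0 + (-1 + 1/2)*Δx), w x)
    (hw0 : w0 = (1/Δx) * ∫ x in (x0 + (0 - 1/2)*Δx)..(x0 + (0 + 1/2)*Δx), w x)
    (hwp1 : wp1 = (1/Δx) * ∫ x in (x0 + (1 - 1/2)*Δx)..(x0 + (1 + 1/2)*Δx), w x) :
    |w x0 - (w0 - (1/24) * (wp1 - 2*w0 + wm1))|
      ≤ (Δx^4/100) *
        ⨆ x ∈ Set.Icc (x0 - 3*Δx/2) (x0 + 3*Δx/2), |iteratedDeriv 4 w x| := by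
  subst hwm1 hw0 hwp1
  set K := Icc (x0 - 3 * Δx / 2) (x0 + 3 * Δx / 2)
  set M := ⨆ x ∈ K, |iteratedDeriv 4 w x|
  have hx0 : x0 ∈ K := ⟨by linarith, by linarith⟩
  have hMK : ∀ t ∈ K, |iteratedDeriv 4 w t| ≤ M := fun t ht =>
    isCompact_Icc.le_biSup_of_continuousOn
      (hw.continuous_iteratedDeriv 4 le_rfl).abs.continuousOn ht
  set P := fun t => ∑ j ∈ range 4, iteratedDeriv j w x0 / j ! * (t - x0) ^ j
  have hRC : ∀ t ∈ K, |w t - P t| ≤ M / 24 * (t - x0) ^ 4 := fun t ht => by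
    have h := abs_sub_sum_taylor_le (n := 3) hw fun s hs => hMK s (uIcc_subset_Icc hx0 ht hs)
    rw [Even.pow_abs (by decide)] at h
    convert h using 1
    norm_num [Nat.factorial]
    ring
  have hE : pointValueError w x0 Δx = pointValueError (fun t => w t - P t) x0 Δx := by
    rw [pointValueError_sub hw.continuous (by fun_prop), pointValueError_cubic _ _ hΔx.ne',
      sub_zero]
  change |pointValueError w x0 Δx| ≤ _
  rw [hE]
  refine (abs_pointValueError_le hΔx (by simp [P, Finset.sum_range_succ']) hRC).trans ?_
  nlinarith [(abs_nonneg _).trans (hMK x0 hx0), pow_pos hΔx 4]
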